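/- arXiv:2604.24229 — 2 statements merged into one kernel-verified Lean document; each statement's English description precedes it below -/
import Mathlib

section
/- (Rotational invariance of the Winfree model on SO(n).) Let n, N ≥ 1, κ > 0, Ω_1,…,Ω_N skew-symmetric, Q, Q̃ ∈ SO(n), and η, I : ℝ^{n×n} → ℝ. Suppose R_1,…,R_N : [0,∞) → ℝ^{n×n} are differentiable, take values in SO(n), and satisfy R_i'(t)·R_i(t)ᵀ = Ω_i + (κ/(2N))·η(R_i(t))·(Σ_{j=1}^N I(R_j(t)))·(Q R_i(t)ᵀ − R_i(t) Qᵀ) for all t ≥ 0 and i = 1,…,N. Define η̃(Y) := η(Y Q̃ᵀ Q), J(Y) := I(Y Q̃ᵀ Q), and R̃_i(t) := R_i(t) Qᵀ Q̃. Then each R̃_i takes values in SO(n), R̃_i(0) = R_i(0) Qᵀ Q̃, and R̃_i'(t)·R̃_i(t)ᵀ = Ω_i + (κ/(2N))·η̃(R̃_i(t))·(Σ_{j=1}^N J(R̃_j(t)))·(Q̃ R̃_i(t)ᵀ − R̃_i(t) Q̃ᵀ) for all t ≥ 0 and i = 1,…,N. -/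
open Matrix Real

def isSO {n : ℕ} (R : Matrix (Fin n) (Fin n) ℝ) : Prop :=
  Rᵀ * R = 1 ∧ R.det = 1

def isSkew {n : ℕ} (X : Matrix (Fin n) (Fin n) ℝ) : Prop := Xᵀ = -X

/-
In the rotated frame `R̃ = R P` with `P = Qᵀ Q̃` orthogonal, the frame change cancels in every
term of the equation: `R̃' R̃ᵀ = R' P Pᵀ Rᵀ = R' Rᵀ`, the arguments of `η̃` and `J` are
`R̃ Q̃ᵀ Q = R`, and `Q̃ R̃ᵀ - R̃ Q̃ᵀ = Q Rᵀ - R Qᵀ`. So the rotated system is the original one.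
-/

section FrameChange

variable {m α : Type*} [Fintype m] [DecidableEq m] [CommRing α]

theorem Matrix.mul_mul_mul_transpose_mul_cancel {Q Q' : Matrix m m α}
    (hQ : Qᵀ * Q = 1) (hQ' : Q' * Q'ᵀ = 1) (Y : Matrix m m α) :
    Y * Qᵀ * Q' * Q'ᵀ * Q = Y := by
  rw [Matrix.mul_assoc (Y * Qᵀ), hQ', Matrix.mul_one, Matrix.mul_assoc, hQ, Matrix.mul_one]

theorem Matrix.mul_mul_mul_mul_transpose_cancel {Q Q' : Matrix m m α}
    (hQ : Qᵀ * Q = 1) (hQ' : Q' * Q'ᵀ = 1) (X R : Matrix m m α) :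
    X * Qᵀ * Q' * (R * Qᵀ * Q')ᵀ = X * Rᵀ := by
  rw [transpose_mul, transpose_mul, transpose_transpose, ← Matrix.mul_assoc,
    ← Matrix.mul_assoc, mul_mul_mul_transpose_mul_cancel hQ hQ']

theorem Matrix.mul_transpose_sub_mul_transpose_cancel {Q' : Matrix m m α}
    (hQ' : Q' * Q'ᵀ = 1) (Q R : Matrix m m α) :
    Q' * (R * Qᵀ * Q')ᵀ - R * Qᵀ * Q' * Q'ᵀ = Q * Rᵀ - R * Qᵀ := by
  rw [transpose_mul, transpose_mul, transpose_transpose, ← Matrix.mul_assoc, hQ',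
    Matrix.one_mul, Matrix.mul_assoc (R * Qᵀ), hQ', Matrix.mul_one]

end FrameChange

theorem HasDerivWithinAt.matrix_mul_const_apply {m p q : Type*} [Fintype p]
    {A : ℝ → Matrix m p ℝ} {A' : Matrix m p ℝ} {S : Set ℝ} {t : ℝ}
    (hA : ∀ k l, HasDerivWithinAt (fun s => A s k l) (A' k l) S t) (M : Matrix p q ℝ)
    (k : m) (l : q) :
    HasDerivWithinAt (fun s => (A s * M) k l) ((A' * M) k l) S t := by
  simp only [mul_apply]
  exact HasDerivWithinAt.fun_sum fun j _ => (hA k j).mul_const (M j l)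

theorem isSO.mul_transpose_self {n : ℕ} {R : Matrix (Fin n) (Fin n) ℝ} (hR : isSO R) :
    R * Rᵀ = 1 :=
  mul_eq_one_comm.mp hR.1

theorem isSO.transpose {n : ℕ} {R : Matrix (Fin n) (Fin n) ℝ} (hR : isSO R) : isSO Rᵀ :=
  ⟨by rw [transpose_transpose, hR.mul_transpose_self], by rw [det_transpose, hR.2]⟩

theorem isSO.mul {n : ℕ} {A B : Matrix (Fin n) (Fin n) ℝ} (hA : isSO A) (hB : isSO B) :
    isSO (A * B) := by
  refine ⟨?_, by rw [det_mul, hA.2, hB.2, one_mul]⟩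
  rw [transpose_mul, Matrix.mul_assoc, ← Matrix.mul_assoc Aᵀ, hA.1, Matrix.one_mul, hB.1]

theorem stmt1_general (n N : ℕ) (κ : ℝ)
    (Ω : Fin N → Matrix (Fin n) (Fin n) ℝ)
    (Q Q' : Matrix (Fin n) (Fin n) ℝ) (hQ : isSO Q) (hQ' : isSO Q')
    (η I : Matrix (Fin n) (Fin n) ℝ → ℝ)
    (R R' : Fin N → ℝ → Matrix (Fin n) (Fin n) ℝ)
    (hSO : ∀ i, ∀ t ∈ Set.Ici (0:ℝ), isSO (R i t))
    (hderiv : ∀ i, ∀ t ∈ Set.Ici (0:ℝ), ∀ k l,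
      HasDerivWithinAt (fun s => R i s k l) (R' i t k l) (Set.Ici 0) t)
    (hode : ∀ i, ∀ t ∈ Set.Ici (0:ℝ),
      R' i t * (R i t)ᵀ =
        Ω i + (κ / (2 * (N:ℝ)) * η (R i t) * ∑ j, I (R j t)) •
          (Q * (R i t)ᵀ - R i t * Qᵀ)) :
    ∀ i, (∀ t ∈ Set.Ici (0:ℝ), isSO (R i t * Qᵀ * Q')) ∧
      (R i 0 * Qᵀ * Q' = R i 0 * Qᵀ * Q') ∧
      ∀ t ∈ Set.Ici (0:ℝ),
        (∀ k l, HasDerivWithinAt (fun s => (R i s * Qᵀ * Q') k l)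
          ((R' i t * Qᵀ * Q') k l) (Set.Ici 0) t) ∧
        (R' i t * Qᵀ * Q') * (R i t * Qᵀ * Q')ᵀ =
          Ω i + (κ / (2 * (N:ℝ)) *
              (fun Y => η (Y * Q'ᵀ * Q)) (R i t * Qᵀ * Q') *
              ∑ j, (fun Y => I (Y * Q'ᵀ * Q)) (R j t * Qᵀ * Q')) •
            (Q' * (R i t * Qᵀ * Q')ᵀ - (R i t * Qᵀ * Q') * Q'ᵀ) := by
  intro i
  refine ⟨fun t ht => ((hSO i t ht).mul hQ.transpose).mul hQ', rfl, fun t ht => ⟨?_, ?_⟩⟩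
  · intro k l
    simp only [Matrix.mul_assoc _ Qᵀ Q']
    exact HasDerivWithinAt.matrix_mul_const_apply (hderiv i t ht) _ k l
  · rw [mul_mul_mul_mul_transpose_cancel hQ.1 hQ'.mul_transpose_self,
      mul_transpose_sub_mul_transpose_cancel hQ'.mul_transpose_self]
    simp only [mul_mul_mul_transpose_mul_cancel hQ.1 hQ'.mul_transpose_self]
    exact hode i t ht

/-- rotational invariance of the Winfree model on SO(n). -/
theorem stmt1 (n N : ℕ) (hn : 1 ≤ n) (hN : 1 ≤ N) (κ : ℝ) (hκ : 0 < κ)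
    (Ω : Fin N → Matrix (Fin n) (Fin n) ℝ) (hΩ : ∀ i, isSkew (Ω i))
    (Q Q' : Matrix (Fin n) (Fin n) ℝ) (hQ : isSO Q) (hQ' : isSO Q')
    (η I : Matrix (Fin n) (Fin n) ℝ → ℝ)
    (R R' : Fin N → ℝ → Matrix (Fin n) (Fin n) ℝ)
    (hSO : ∀ i, ∀ t ∈ Set.Ici (0:ℝ), isSO (R i t))
    (hderiv : ∀ i, ∀ t ∈ Set.Ici (0:ℝ), ∀ k l,
      HasDerivWithinAt (fun s => R i s k l) (R' i t k l) (Set.Ici 0) t)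
    (hode : ∀ i, ∀ t ∈ Set.Ici (0:ℝ),
      R' i t * (R i t)ᵀ =
        Ω i + (κ / (2 * (N:ℝ)) * η (R i t) * ∑ j, I (R j t)) •
          (Q * (R i t)ᵀ - R i t * Qᵀ)) :
    ∀ i, (∀ t ∈ Set.Ici (0:ℝ), isSO (R i t * Qᵀ * Q')) ∧
      (R i 0 * Qᵀ * Q' = R i 0 * Qᵀ * Q') ∧
      ∀ t ∈ Set.Ici (0:ℝ),
        (∀ k l, HasDerivWithinAt (fun s => (R i s * Qᵀ * Q') k l)
          ((R' i t * Qᵀ * Q') k l) (Set.Ici 0) t) ∧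
        (R' i t * Qᵀ * Q') * (R i t * Qᵀ * Q')ᵀ =
          Ω i + (κ / (2 * (N:ℝ)) *
              (fun Y => η (Y * Q'ᵀ * Q)) (R i t * Qᵀ * Q') *
              ∑ j, (fun Y => I (Y * Q'ᵀ * Q)) (R j t * Qᵀ * Q')) •
            (Q' * (R i t * Qᵀ * Q')ᵀ - (R i t * Qᵀ * Q') * Q'ᵀ) :=
  stmt1_general n N κ Ω Q Q' hQ hQ' η I R R' hSO hderiv hode
end

section
/- (Reduction to the classical Winfree model for n = 2.) Let N ≥ 1, κ > 0, ν_1,…,ν_N ∈ ℝ, and Î : ℝ → ℝ. Suppose θ_1,…,θ_N : [0,∞) → ℝ are differentiable and satisfy the classical Winfree model θ_i'(t) = ν_i − (κ/N)·(Σ_{j=1}^N Î(θ_j(t)))·sin θ_i(t) for all t ≥ 0 and i = 1,…,N. Define the 2×2 matrices R_i(t) := [[cos θ_i(t), −sin θ_i(t)], [sin θ_i(t), cos θ_i(t)]] and Ω_i := [[0, −ν_i], [ν_i, 0]]. Then each R_i takes values in SO(2) and satisfies R_i'(t) = Ω_i R_i(t) + (κ/(2N))·(Σ_{j=1}^N Î(θ_j(t)))·(I₂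 − R_i(t)²) for all t ≥ 0 and i = 1,…,N. -/
/-!
With `J = rotGen`, the curve `R = rotM θ` satisfies `R' = θ' • J R`, and the
double-angle formulas give `1 - R² = -2 sin θ • J R`. Since `Ω_i = ν_i • J`, the right-hand side
of the matrix model equals `(ν_i - (κ/N) (∑ Î(θ_j)) sin θ_i) • J R`, i.e. `θ_i' • J R`.
-/

open Matrix Real

/-- The rotation matrix of angle `θ`. -/
noncomputable def rotM (θ : ℝ) : Matrix (Fin 2) (Fin 2) ℝ :=
  !![Real.cos θ, -Real.sin θ; Real.sin θ, Real.cos θ]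

/-- The generator of plane rotations: `rotM θ = exp (θ • rotGen)`. -/
def rotGen : Matrix (Fin 2) (Fin 2) ℝ :=
  !![0, -1; 1, 0]

lemma rotM_transpose_mul_self (θ : ℝ) : (rotM θ)ᵀ * rotM θ = 1 := by
  have hpyth := sin_sq_add_cos_sq θ
  ext k l
  fin_cases k <;> fin_cases l <;>
    simp [rotM, Matrix.mul_apply, Fin.sum_univ_two] <;> linarith

lemma det_rotM (θ : ℝ) : (rotM θ).det = 1 := by
  simp only [rotM, det_fin_two_of]
  linear_combination sin_sq_add_cos_sq θ

lemma isSO_rotM (θ : ℝ) : isSO (rotM θ) :=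
  ⟨rotM_transpose_mul_self θ, det_rotM θ⟩

lemma rotGen_mul_rotM (θ : ℝ) :
    rotGen * rotM θ = !![-sin θ, -cos θ; cos θ, -sin θ] := by
  simp [rotGen, rotM]

lemma one_sub_rotM_mul_self (θ : ℝ) :
    1 - rotM θ * rotM θ = (-2 * sin θ) • (rotGen * rotM θ) := by
  have hpyth := sin_sq_add_cos_sq θ
  rw [rotGen_mul_rotM]
  ext k l
  fin_cases k <;> fin_cases l <;> simp [rotM] <;> linarith

lemma HasDerivWithinAt.rotM_apply {f : ℝ → ℝ} {f' t : ℝ} {s : Set ℝ}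
    (hf : HasDerivWithinAt f f' s t) (k l : Fin 2) :
    HasDerivWithinAt (fun x => rotM (f x) k l) ((f' • (rotGen * rotM (f t))) k l) s t := by
  rw [rotGen_mul_rotM]
  fin_cases k <;> fin_cases l
  · simpa [rotM, mul_comm] using hf.cos
  · simpa [rotM, mul_comm] using hf.sin.fun_neg
  · simpa [rotM, mul_comm] using hf.sin
  · simpa [rotM, mul_comm] using hf.cos

theorem stmt2_general (N : ℕ) (κ : ℝ) (ν : Fin N → ℝ)
    (Ihat : ℝ → ℝ) (θ : Fin N → ℝ → ℝ)
    (hode : ∀ i, ∀ t ∈ Set.Ici (0:ℝ),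
      HasDerivWithinAt (θ i)
        (ν i - κ / (N:ℝ) * (∑ j, Ihat (θ j t)) * Real.sin (θ i t)) (Set.Ici 0) t) :
    ∀ i, (∀ t ∈ Set.Ici (0:ℝ), isSO (rotM (θ i t))) ∧
      ∀ t ∈ Set.Ici (0:ℝ), ∀ k l : Fin 2,
        HasDerivWithinAt (fun s => rotM (θ i s) k l)
          ((!![0, -ν i; ν i, 0] * rotM (θ i t) +
            (κ / (2 * (N:ℝ)) * ∑ j, Ihat (θ j t)) •
              (1 - rotM (θ i t) * rotM (θ i t))) k l)
          (Set.Ici 0) t := by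
  intro i
  refine ⟨fun t _ => isSO_rotM _, fun t ht k l => ?_⟩
  have hgen : !![0, -ν i; ν i, 0] = ν i • rotGen := by
    ext k l; fin_cases k <;> fin_cases l <;> simp [rotGen]
  have hcoef : ν i + (κ / (2 * N) * ∑ j, Ihat (θ j t)) * (-2 * sin (θ i t)) =
      ν i - κ / N * (∑ j, Ihat (θ j t)) * sin (θ i t) := by
    ring
  convert (hode i t ht).rotM_apply k l using 2
  rw [hgen, one_sub_rotM_mul_self, smul_mul_assoc, smul_smul, ← add_smul, hcoef]

/-- reduction of the Winfree matrix model on SO(2) to the classical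
Winfree model with sensitivity `-sin`. -/
theorem stmt2 (N : ℕ) (hN : 1 ≤ N) (κ : ℝ) (hκ : 0 < κ) (ν : Fin N → ℝ)
    (Ihat : ℝ → ℝ) (θ : Fin N → ℝ → ℝ)
    (hode : ∀ i, ∀ t ∈ Set.Ici (0:ℝ),
      HasDerivWithinAt (θ i)
        (ν i - κ / (N:ℝ) * (∑ j, Ihat (θ j t)) * Real.sin (θ i t)) (Set.Ici 0) t) :
    ∀ i, (∀ t ∈ Set.Ici (0:ℝ), isSO (rotM (θ i t))) ∧
      ∀ t ∈ Set.Ici (0:ℝ), ∀ k l : Fin 2,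
        HasDerivWithinAt (fun s => rotM (θ i s) k l)
          ((!![0, -ν i; ν i, 0] * rotM (θ i t) +
            (κ / (2 * (N:ℝ)) * ∑ j, Ihat (θ j t)) •
              (1 - rotM (θ i t) * rotM (θ i t))) k l)
          (Set.Ici 0) t :=
  stmt2_general N κ ν Ihat θ hode
end
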